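/- Set λ1 = (h1+h2−l1−l2−α1−α2−β+2)/2 and λ2 = (h1+h2−l1−l2−α1−α2+β+2)/2. Let λ ∈ {λ1, λ2} and α ∈ {α1, α2}, and assume λ = −α. Then the function x ↦ x^{λ} on (0,∞) is an eigenfunction of A⁴: for all x > 0, (A⁴ (·^{λ}))(x) = ( −(q^{h1+1/2}t1 + q^{h2+1/2}t2) q^{α} − (q^{l1−1/2}t1 + q^{l2−1/2}t2) q^{α1+α2−α} ) · x^{λ}. -/

import Mathlib

/-!
The shifts `x ↦ x / q` and `x ↦ q * x` multiply `x ^ λ` by `q ^ (-λ)` and `q ^ λ`, so `A⁴` sends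
`x ^ λ` to `x ^ λ * (c₁ x + c₀ + c₋₁ x⁻¹)`. Here `c₁ = q ^ (-λ) + q ^ (α₁ + α₂ + λ) - q ^ α₁ - q ^ α₂`
vanishes for `λ = -α`, `α ∈ {α₁, α₂}`; in `c₋₁` the two shifted terms carry `q ^ (m ± β / 2) t₁ t₂`,
`m = (h₁ + h₂ + l₁ + l₂ + α₁ + α₂) / 2`, exactly when `λ ∈ {λ₁, λ₂}`, and then cancel the last term.
What remains, `c₀`, is the eigenvalue.
-/

noncomputable def qp (q r : ℝ) : ℂ := ((q ^ r : ℝ) : ℂ)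

noncomputable def A4 (q h1 h2 l1 l2 a1 a2 b : ℝ) (t1 t2 : ℂ) (g : ℝ → ℂ) (x : ℝ) : ℂ :=
  (x : ℂ)⁻¹ * ((x : ℂ) - qp q (h1 + 1/2) * t1) * ((x : ℂ) - qp q (h2 + 1/2) * t2) * g (x / q)
    + qp q (a1 + a2) * (x : ℂ)⁻¹ * ((x : ℂ) - qp q (l1 - 1/2) * t1) * ((x : ℂ) - qp q (l2 - 1/2) * t2) * g (q * x)
    - ((qp q a1 + qp q a2) * (x : ℂ)
        + qp q ((h1 + h2 + l1 + l2 + a1 + a2) / 2) * (qp q (b / 2) + qp q (-b / 2)) * t1 * t2 * (x : ℂ)⁻¹) * g x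

lemma qp_add {q : ℝ} (hq : 0 < q) (r s : ℝ) : qp q (r + s) = qp q r * qp q s := by
  simp [qp, Real.rpow_add hq]

lemma qp_add_qp_add_sub {q a1 a2 α : ℝ} (hα : α = a1 ∨ α = a2) :
    qp q α + qp q (a1 + a2 - α) = qp q a1 + qp q a2 := by
  rcases hα with rfl | rfl
  · rw [add_sub_cancel_left]
  · rw [add_sub_cancel_right, add_comm]

lemma qp_add_qp_of_add_eq {q : ℝ} (hq : 0 < q) {m b u v : ℝ} (hsum : u + v = 2 * m)
    (hu : u = m + b / 2 ∨ u = m + -b / 2) :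
    qp q u + qp q v = qp q m * (qp q (b / 2) + qp q (-b / 2)) := by
  rw [mul_add, ← qp_add hq, ← qp_add hq]
  rcases hu with rfl | rfl
  · rw [show v = m + -b / 2 by linarith]
  · rw [show v = m + b / 2 by linarith, add_comm]

theorem A4_rpow_of_coeff_eq_zero {q h1 h2 l1 l2 a1 a2 b : ℝ} (hq : 0 < q) (t1 t2 : ℂ) (lam : ℝ)
    (hlin : qp q (-lam) + qp q (a1 + a2 + lam) = qp q a1 + qp q a2)
    (hinv : qp q (h1 + 1/2) * qp q (h2 + 1/2) * qp q (-lam)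
        + qp q (l1 - 1/2) * qp q (l2 - 1/2) * qp q (a1 + a2 + lam)
      = qp q ((h1 + h2 + l1 + l2 + a1 + a2) / 2) * (qp q (b / 2) + qp q (-b / 2)))
    {x : ℝ} (hx : 0 < x) :
    A4 q h1 h2 l1 l2 a1 a2 b t1 t2 (fun y : ℝ => ((y ^ lam : ℝ) : ℂ)) x
      = (-(qp q (h1 + 1/2) * t1 + qp q (h2 + 1/2) * t2) * qp q (-lam)
          - (qp q (l1 - 1/2) * t1 + qp q (l2 - 1/2) * t2) * qp q (a1 + a2 + lam))
        * ((x ^ lam : ℝ) : ℂ) := by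
  have hdiv : (((x / q) ^ lam : ℝ) : ℂ) = ((x ^ lam : ℝ) : ℂ) * qp q (-lam) := by
    rw [Real.div_rpow hx.le hq.le, div_eq_mul_inv, ← Real.rpow_neg hq.le, Complex.ofReal_mul, qp]
  have hmul : qp q (a1 + a2) * (((q * x) ^ lam : ℝ) : ℂ)
      = qp q (a1 + a2 + lam) * ((x ^ lam : ℝ) : ℂ) := by
    rw [Real.mul_rpow hq.le hx.le, Complex.ofReal_mul, qp_add hq (a1 + a2) lam, ← mul_assoc]
    rfl
  have hx_inv : (x : ℂ)⁻¹ * x = 1 := inv_mul_cancel₀ (by exact_mod_cast hx.ne')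
  set P : ℂ := ((x ^ lam : ℝ) : ℂ)
  set r := qp q (-lam)
  set s := qp q (a1 + a2 + lam)
  unfold A4
  beta_reduce
  linear_combination
    ((x : ℂ)⁻¹ * ((x : ℂ) - qp q (h1 + 1/2) * t1) * ((x : ℂ) - qp q (h2 + 1/2) * t2)) * hdiv
    + ((x : ℂ)⁻¹ * ((x : ℂ) - qp q (l1 - 1/2) * t1) * ((x : ℂ) - qp q (l2 - 1/2) * t2)) * hmul
    + (P * x) * hlin + (P * t1 * t2 * (x : ℂ)⁻¹) * hinv
    + P * (x * (r + s) - (qp q (h1 + 1/2) * t1 + qp q (h2 + 1/2) * t2) * r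
        - (qp q (l1 - 1/2) * t1 + qp q (l2 - 1/2) * t2) * s) * hx_inv

theorem stmt14_general (q h1 h2 l1 l2 a1 a2 β : ℝ) (hq : 0 < q)
    (t1 t2 : ℂ)
    (lam α : ℝ)
    (hlam : lam = (h1 + h2 - l1 - l2 - a1 - a2 - β + 2) / 2 ∨
      lam = (h1 + h2 - l1 - l2 - a1 - a2 + β + 2) / 2)
    (hα : α = a1 ∨ α = a2) (hla : lam = -α) :
    ∀ x : ℝ, 0 < x →
      A4 q h1 h2 l1 l2 a1 a2 β t1 t2 (fun y : ℝ => ((y ^ lam : ℝ) : ℂ)) x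
        = (-(qp q (h1 + 1/2) * t1 + qp q (h2 + 1/2) * t2) * qp q α
            - (qp q (l1 - 1/2) * t1 + qp q (l2 - 1/2) * t2) * qp q (a1 + a2 - α))
          * ((x ^ lam : ℝ) : ℂ) := by
  intro x hx
  subst hla
  have hlin : qp q (-(-α)) + qp q (a1 + a2 + -α) = qp q a1 + qp q a2 := by
    rw [neg_neg, ← sub_eq_add_neg]
    exact qp_add_qp_add_sub hα
  have hinv : qp q (h1 + 1/2) * qp q (h2 + 1/2) * qp q (-(-α))
      + qp q (l1 - 1/2) * qp q (l2 - 1/2) * qp q (a1 + a2 + -α)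
      = qp q ((h1 + h2 + l1 + l2 + a1 + a2) / 2) * (qp q (β / 2) + qp q (-β / 2)) := by
    simp only [← qp_add hq]
    refine qp_add_qp_of_add_eq hq (by ring) ?_
    rcases hlam with h | h
    · left; linarith
    · right; linarith
  have heigen := A4_rpow_of_coeff_eq_zero hq t1 t2 (-α) hlin hinv hx
  rwa [neg_neg, ← sub_eq_add_neg] at heigen

theorem stmt14 (q h1 h2 l1 l2 a1 a2 β : ℝ) (hq : 0 < q) (hq1 : q ≠ 1)
    (t1 t2 : ℂ) (ht1 : t1 ≠ 0) (ht2 : t2 ≠ 0)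
    (lam α : ℝ)
    (hlam : lam = (h1 + h2 - l1 - l2 - a1 - a2 - β + 2) / 2 ∨
      lam = (h1 + h2 - l1 - l2 - a1 - a2 + β + 2) / 2)
    (hα : α = a1 ∨ α = a2) (hla : lam = -α) :
    ∀ x : ℝ, 0 < x →
      A4 q h1 h2 l1 l2 a1 a2 β t1 t2 (fun y : ℝ => ((y ^ lam : ℝ) : ℂ)) x
        = (-(qp q (h1 + 1/2) * t1 + qp q (h2 + 1/2) * t2) * qp q α
            - (qp q (l1 - 1/2) * t1 + qp q (l2 - 1/2) * t2) * qp q (a1 + a2 - α))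
          * ((x ^ lam : ℝ) : ℂ) :=
  stmt14_general q h1 h2 l1 l2 a1 a2 β hq t1 t2 lam α hlam hα hla
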